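/- arXiv:math/0201213 — 2 statements merged into one kernel-verified Lean document; each statement's English description precedes it below -/
import Mathlib

section
/- For each word σ of length k in the free monoid on N generators, define W^p for p = 1,…,k by W_s^{*p} = (1/√2) Σ_{r ∈ J_s} E_{r+p−1, r+p}^{2k}, where J_s = {l ∈ {1,…,k} : i_{k+1−l} = s} and E_{ij}^{2k} are the matrix units amplified by a Hilbert space. Then each W^p lies in B_N(E) (indeed Σ_s W_s^p W_s^{*p} = (1/2)Σ_{r=1}^{k} E_{r+p,r+p}^{2k} < I), and the word-product satisfies W_σ^{*p} = 2^{−k/2} E_{p, k+p}^{2k} while W_τ^p = 0 for every word τ ≠ σ with |τ| ≥ |σ|. -/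
/-!
Up to the factor `1/√2`, `W_s^{*p}` is a shift `A_s` sending `e_{i+1}` to `e_i` exactly when
position `i` carries the letter `s` in the labelling that writes the reversed word `σ` from
position `p` on. A product `A_{t_1} ⋯ A_{t_m}` has at most one nonzero entry, at `(i, i + m)`,
present iff `t_1 ⋯ t_m` is read off the labelling from position `i`. Since `W_τ^*` is
`2^{-|τ|/2}` times the product of the `A`'s along `τ` reversed, for `|τ| ≥ |σ|` this forces
`i = p` and `τ = σ`. Likewise `A_s^* A_s` is the diagonal projection onto the positions entered
by an `s`-labelled step, so `Σ_s W_s W_s^*` is half the projection onto positions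
`p+1, …, p+k`, and `1 - Σ_s W_s W_s^*` is diagonal with entries `1/2` and `1`.
-/

open scoped ComplexOrder
open Matrix

theorem List.prod_map_smul_const {S M ι : Type*} [Monoid S] [Monoid M] [MulAction S M]
    [IsScalarTower S M M] [SMulCommClass S M M] (c : S) (f : ι → M) (l : List ι) :
    (l.map fun i => c • f i).prod = c ^ l.length • (l.map f).prod := by
  induction l with
  | nil => simp
  | cons i l ih => rw [List.map_cons, List.prod_cons, ih, smul_mul_smul_comm, ← pow_succ',
      List.map_cons, List.prod_cons, List.length_cons]

theorem Matrix.conjTranspose_list_prod_map {ι R : Type*} [Semiring R] [StarRing R] {n : Type*}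
    [Fintype n] [DecidableEq n] (B : ι → Matrix n n R) (M : List ι) :
    (M.map B).prodᴴ = (M.reverse.map fun i => (B i)ᴴ).prod := by
  rw [conjTranspose_list_prod, List.map_map, List.map_reverse]
  rfl

section AdjointScaled

variable {ι R n : Type*} [CommSemiring R] [StarRing R] [Fintype n] [DecidableEq n]
  {W A : ι → Matrix n n R} {c : R}

theorem sum_mul_conjTranspose_of_conjTranspose_eq_smul [Fintype ι]
    (h : ∀ s, (W s)ᴴ = c • A s) :
    ∑ s, W s * (W s)ᴴ = (star c * c) • ∑ s, (A s)ᴴ * A s := by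
  rw [Finset.smul_sum]
  refine Finset.sum_congr rfl fun s _ => ?_
  have hW : W s = star c • (A s)ᴴ := by
    rw [← conjTranspose_conjTranspose (W s), h, conjTranspose_smul]
  rw [h, hW, smul_mul_smul_comm]

theorem conjTranspose_list_prod_map_of_conjTranspose_eq_smul (h : ∀ s, (W s)ᴴ = c • A s)
    (M : List ι) : (M.map W).prodᴴ = c ^ M.length • (M.reverse.map A).prod := by
  rw [conjTranspose_list_prod_map, List.map_congr_left fun s _ => h s,
    List.prod_map_smul_const, List.length_reverse]

end AdjointScaled

section LabeledShift

variable {α R : Type*} [DecidableEq α] {n : ℕ}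

def labeledShift [Zero R] [One R] (g : ℕ → Option α) (s : α) : Matrix (Fin n) (Fin n) R :=
  of fun i j => if j.1 = i.1 + 1 ∧ g i.1 = some s then 1 else 0

theorem list_prod_map_labeledShift_apply [Semiring R] (g : ℕ → Option α) (M : List α)
    (i j : Fin n) :
    (M.map (labeledShift g)).prod i j =
      if j.1 = i.1 + M.length ∧ ∀ u < M.length, g (i.1 + u) = M[u]? then (1 : R) else 0 := by
  induction M generalizing i with
  | nil => simp [one_apply, Fin.ext_iff, eq_comm]
  | cons t M ih =>
    rw [List.map_cons, List.prod_cons, mul_apply]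
    by_cases hi : i.1 + 1 < n
    · rw [Fintype.sum_eq_single ⟨i.1 + 1, hi⟩ fun l hl => by
        simp [labeledShift, Fin.ext_iff] at hl ⊢; omega]
      simp only [labeledShift, of_apply, ih, List.length_cons, Nat.forall_lt_succ_left,
        List.getElem?_cons_zero, List.getElem?_cons_succ]
      simp only [add_assoc, add_comm 1, true_and]
      split_ifs <;> simp_all
    · have hj := j.isLt
      rw [Finset.sum_eq_zero fun l _ => by simp [labeledShift]; omega, if_neg (by simp; omega)]

theorem conjTranspose_labeledShift_mul_self [Semiring R] [StarRing R] (g : ℕ → Option α)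
    (s : α) :
    (labeledShift g s)ᴴ * labeledShift g s =
      diagonal fun i : Fin n => if i.1 ≠ 0 ∧ g (i.1 - 1) = some s then (1 : R) else 0 := by
  ext i j
  rw [mul_apply, diagonal_apply]
  by_cases hi : i.1 ≠ 0
  · rw [Fintype.sum_eq_single ⟨i.1 - 1, by omega⟩ fun l hl => ?_]
    · simp only [labeledShift, conjTranspose_apply, of_apply]
      rw [Nat.sub_add_cancel (Nat.one_le_iff_ne_zero.2 hi)]
      by_cases hg : g (i.1 - 1) = some s <;> simp [hg, hi, Fin.ext_iff, eq_comm]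
    · have : (labeledShift g s : Matrix (Fin n) (Fin n) R) l i = 0 :=
        if_neg fun h => hl (Fin.ext (by have := h.1; simp only; omega))
      rw [conjTranspose_apply, this, star_zero, zero_mul]
  · refine (Finset.sum_eq_zero fun l _ => ?_).trans (by simp [hi])
    have : (labeledShift g s : Matrix (Fin n) (Fin n) R) l i = 0 := if_neg (by omega)
    rw [conjTranspose_apply, this, star_zero, zero_mul]

theorem sum_conjTranspose_labeledShift_mul_self [Fintype α] [Semiring R] [StarRing R]
    (g : ℕ → Option α) :
    ∑ s, (labeledShift g s)ᴴ * labeledShift g s =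
      diagonal fun i : Fin n => if i.1 ≠ 0 ∧ (g (i.1 - 1)).isSome then (1 : R) else 0 := by
  ext i j
  simp only [conjTranspose_labeledShift_mul_self, Matrix.sum_apply, diagonal_apply]
  obtain rfl | hij := eq_or_ne i j
  · by_cases hi : i.1 = 0
    · simp [hi]
    · cases g (i.1 - 1) <;> simp [hi]
  · simp [hij]

end LabeledShift

section WordAt

variable {α R : Type*} {n : ℕ}

def wordAt (V : List α) (p i : ℕ) : Option α := if p ≤ i then V[i - p]? else none

theorem isSome_wordAt {V : List α} {p i : ℕ} :
    (wordAt V p i).isSome ↔ p ≤ i ∧ i < p + V.length := by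
  unfold wordAt
  split_ifs with h
  · simp only [isSome_getElem?]; omega
  · simp [h]

theorem wordAt_self_add (V : List α) (p u : ℕ) : wordAt V p (p + u) = V[u]? := by
  simp [wordAt]

theorem eq_of_forall_wordAt_eq {V M : List α} {p i : ℕ} (hV : V ≠ [])
    (hVM : V.length ≤ M.length) (h : ∀ u < M.length, wordAt V p (i + u) = M[u]?) :
    i = p ∧ M = V := by
  have hM : 0 < M.length := (List.length_pos_iff.2 hV).trans_le hVM
  have hsome : ∀ u < M.length, (wordAt V p (i + u)).isSome := fun u hu => by
    rw [h u hu, List.getElem?_eq_getElem hu]; rfl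
  have hfirst := isSome_wordAt.1 (hsome 0 hM)
  have hlast := isSome_wordAt.1 (hsome _ (Nat.sub_lt hM one_pos))
  have hip : i = p := by omega
  subst hip
  refine ⟨rfl, List.ext_getElem? fun u => ?_⟩
  by_cases hu : u < M.length
  · rw [← h u hu, wordAt_self_add]
  · rw [List.getElem?_eq_none (by omega), List.getElem?_eq_none (by omega)]

theorem sum_ite_single_eq_labeledShift [DecidableEq α] [Semiring R] {k : ℕ}
    (L : List α) (hL : L.length = k) (p : ℕ) (hpk : p + k < n) (s : α) :
    (∑ r : Fin k,
      if L.get ⟨k - 1 - r.1, by rw [hL]; have := r.isLt; omega⟩ = s then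
        single (⟨r.1 + p, by have := r.isLt; omega⟩ : Fin n)
          (⟨r.1 + p + 1, by have := r.isLt; omega⟩ : Fin n) (1 : R)
      else 0) = labeledShift (wordAt L.reverse p) s := by
  ext i j
  simp only [Matrix.sum_apply, labeledShift, of_apply]
  by_cases hi : p ≤ i.1 ∧ i.1 < p + k
  · have hw : wordAt L.reverse p i.1 = some (L.get ⟨k - 1 - (i.1 - p), by omega⟩) := by
      rw [wordAt, if_pos hi.1, List.getElem?_reverse (by omega),
        List.getElem?_eq_getElem (by omega)]
      simp [hL]
    rw [Fintype.sum_eq_single ⟨i.1 - p, by omega⟩ fun r hr => ?_, hw]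
    · simp only [List.get_eq_getElem, Option.some_inj]
      by_cases hs : L[k - 1 - (i.1 - p)] = s
      · simp [hs, single_apply, Fin.ext_iff, Nat.sub_add_cancel hi.1, eq_comm]
      · simp [hs]
    · have : r.1 + p ≠ i.1 := fun h => hr (Fin.ext (by simp only; omega))
      split_ifs <;> simp [Fin.ext_iff, this]
  · have hw : wordAt L.reverse p i.1 = none := by
      rw [← Option.not_isSome_iff_eq_none, isSome_wordAt, List.length_reverse, hL]
      exact hi
    rw [Finset.sum_eq_zero fun r _ => ?_, hw]
    · simp
    · have : r.1 + p ≠ i.1 := by omega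
      split_ifs <;> simp [Fin.ext_iff, this]

theorem sum_conjTranspose_labeledShift_wordAt_mul_self [Fintype α] [DecidableEq α]
    [Semiring R] [StarRing R] (V : List α) (p : ℕ) :
    ∑ s, (labeledShift (wordAt V p) s)ᴴ * labeledShift (wordAt V p) s =
      diagonal fun i : Fin n => if p < i.1 ∧ i.1 ≤ p + V.length then (1 : R) else 0 := by
  rw [sum_conjTranspose_labeledShift_mul_self]
  congr 1
  ext i
  exact if_congr (by rw [isSome_wordAt]; omega) rfl rfl

theorem list_prod_map_labeledShift_wordAt [DecidableEq α] [Semiring R] {m p : ℕ}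
    {V M : List α} (hVm : V.length = m) (hm : 0 < m) (hmM : m ≤ M.length) (hpm : p + m < n) :
    (M.map (labeledShift (wordAt V p))).prod =
      if M = V then single (⟨p, by omega⟩ : Fin n) ⟨m + p, by omega⟩ (1 : R) else 0 := by
  have hV : V ≠ [] := List.ne_nil_of_length_pos (hVm ▸ hm)
  ext i j
  rw [list_prod_map_labeledShift_apply]
  split_ifs with hpath hMV hMV
  · subst hMV
    obtain ⟨rfl, -⟩ := eq_of_forall_wordAt_eq hV (by omega) hpath.2
    simp [single_apply, Fin.ext_iff]
    omega
  · exact absurd (eq_of_forall_wordAt_eq hV (by omega) hpath.2).2 hMV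
  · subst hMV
    rw [single_apply, if_neg]
    rintro ⟨rfl, rfl⟩
    exact hpath ⟨by simp only; omega, fun u _ => wordAt_self_add M p u⟩
  · rfl

end WordAt

theorem sum_single_succ_eq_diagonal {R : Type*} [Semiring R] {n k : ℕ} (p : ℕ)
    (hpk : p + k < n) :
    ∑ r : Fin k, single (⟨r.1 + p + 1, by have := r.isLt; omega⟩ : Fin n)
        ⟨r.1 + p + 1, by have := r.isLt; omega⟩ (1 : R) =
      diagonal fun i => if p < i.1 ∧ i.1 ≤ p + k then 1 else 0 := by
  ext i j
  rw [Matrix.sum_apply, diagonal_apply]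
  obtain rfl | hij := eq_or_ne i j
  · rw [if_pos rfl]
    by_cases hi : p < i.1 ∧ i.1 ≤ p + k
    · rw [Fintype.sum_eq_single ⟨i.1 - p - 1, by omega⟩ fun r hr => ?_, if_pos hi]
      · simp [single_apply, Fin.ext_iff]
        omega
      · exact single_apply_of_ne _ _ _ _ _ fun h => hr (by simp only [Fin.ext_iff] at h ⊢; omega)
    · rw [if_neg hi]
      exact Finset.sum_eq_zero fun r _ =>
        single_apply_of_ne _ _ _ _ _ fun h => hi (by simp only [Fin.ext_iff] at h; omega)
  · rw [if_neg hij]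
    exact Finset.sum_eq_zero fun r _ =>
      single_apply_of_ne _ _ _ _ _ fun h => hij (h.1.symm.trans h.2)

theorem posDef_one_sub_half_smul_diagonal {ι : Type*} [Fintype ι] [DecidableEq ι]
    (P : ι → Prop) [DecidablePred P] :
    ((1 : Matrix ι ι ℂ) - (1 / 2 : ℂ) • diagonal fun i => if P i then 1 else 0).PosDef := by
  rw [← diagonal_one, ← diagonal_smul, diagonal_sub, posDef_diagonal_iff]
  intro i
  rw [Pi.smul_apply]
  split_ifs <;> norm_num

theorem star_inv_sqrt_two_mul_self :
    star ((Real.sqrt 2 : ℂ))⁻¹ * ((Real.sqrt 2 : ℂ))⁻¹ = 1 / 2 := by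
  rw [star_inv₀, Complex.star_def, Complex.conj_ofReal, ← mul_inv, ← Complex.ofReal_mul,
    Real.mul_self_sqrt zero_le_two]
  norm_num

theorem inv_sqrt_two_pow (k : ℕ) :
    ((Real.sqrt 2 : ℂ))⁻¹ ^ k = (((2 : ℝ) ^ (-(k : ℝ) / 2) : ℝ) : ℂ) := by
  rw [neg_div, Real.rpow_neg zero_le_two, Real.rpow_div_two_eq_sqrt _ zero_le_two,
    Real.rpow_natCast]
  push_cast
  rw [inv_pow]
/-- For a word `σ = i_1⋯i_k` (encoded by the list `L`) in the
free monoid on `N` generators, the tuples `W^p`, `p = 1,…,k`, defined by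
`W_s^{*p} = (1/√2) Σ_{r ∈ J_s} E_{r+p−1, r+p}` with
`J_s = {l : i_{k+1−l} = s}`, lie in the open `N`-ball (indeed
`Σ_s W_s^p W_s^{*p} = (1/2) Σ_{r=1}^k E_{r+p, r+p} < I`), their word product
satisfies `W_σ^{*p} = 2^{−k/2} E_{p, k+p}`, and `W_τ^p = 0` for every word
`τ ≠ σ` with `|τ| ≥ |σ|`. (Matrix units are written with 0-based indices.) -/
theorem matrix_unit_tuples (N k : ℕ) (hk : 0 < k)
    (L : List (Fin N)) (hL : L.length = k)
    (W : Fin k → Fin N → Matrix (Fin (2 * k)) (Fin (2 * k)) ℂ)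
    (hW : ∀ (p : Fin k) (s : Fin N),
      (W p s)ᴴ = ((Real.sqrt 2 : ℂ))⁻¹ •
        ∑ r : Fin k,
          if L.get ⟨k - 1 - r.1, by rw [hL]; have := r.isLt; omega⟩ = s then
            Matrix.single
              (⟨r.1 + p.1, by have := r.isLt; have := p.isLt; omega⟩ : Fin (2 * k))
              (⟨r.1 + p.1 + 1, by have := r.isLt; have := p.isLt; omega⟩ : Fin (2 * k))
              (1 : ℂ)
          else 0) :
    (∀ p : Fin k,
      ∑ s : Fin N, W p s * (W p s)ᴴ =
        ((1 / 2 : ℂ)) • ∑ r : Fin k,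
          Matrix.single
            (⟨r.1 + p.1 + 1, by have := r.isLt; have := p.isLt; omega⟩ : Fin (2 * k))
            (⟨r.1 + p.1 + 1, by have := r.isLt; have := p.isLt; omega⟩ : Fin (2 * k))
            (1 : ℂ)) ∧
    (∀ p : Fin k, (1 - ∑ s : Fin N, W p s * (W p s)ᴴ).PosDef) ∧
    (∀ p : Fin k,
      ((L.map (W p)).prod)ᴴ =
        (((2 : ℝ) ^ (-(k : ℝ) / 2) : ℝ) : ℂ) •
          Matrix.single
            (⟨p.1, by have := p.isLt; omega⟩ : Fin (2 * k))
            (⟨k + p.1, by have := p.isLt; omega⟩ : Fin (2 * k)) (1 : ℂ)) ∧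
    (∀ (p : Fin k) (M : List (Fin N)), M ≠ L → k ≤ M.length →
      (M.map (W p)).prod = 0) := by
  have hA : ∀ (p : Fin k) (s : Fin N),
      (W p s)ᴴ = ((Real.sqrt 2 : ℂ))⁻¹ • labeledShift (wordAt L.reverse p) s := by
    intro p s
    rw [hW, sum_ite_single_eq_labeledShift L hL p.1 (by omega)]
  have hgram : ∀ p : Fin k, ∑ s, W p s * (W p s)ᴴ = (1 / 2 : ℂ) •
      diagonal fun i : Fin (2 * k) => if p.1 < i.1 ∧ i.1 ≤ p.1 + k then 1 else 0 := by
    intro p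
    rw [sum_mul_conjTranspose_of_conjTranspose_eq_smul (hA p), star_inv_sqrt_two_mul_self,
      sum_conjTranspose_labeledShift_wordAt_mul_self, List.length_reverse, hL]
  have hprod : ∀ (p : Fin k) (M : List (Fin N)), k ≤ M.length →
      (M.map (W p)).prodᴴ = ((Real.sqrt 2 : ℂ))⁻¹ ^ M.length •
        if M = L then single (⟨p.1, by omega⟩ : Fin (2 * k)) ⟨k + p.1, by omega⟩ 1
        else 0 := by
    intro p M hkM
    rw [conjTranspose_list_prod_map_of_conjTranspose_eq_smul (hA p),
      list_prod_map_labeledShift_wordAt (List.length_reverse.trans hL) hk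
        (by rwa [List.length_reverse]) (by omega)]
    simp only [List.reverse_inj]
  refine ⟨fun p => ?_, fun p => ?_, fun p => ?_, fun p M hML hkM => ?_⟩
  · rw [hgram, sum_single_succ_eq_diagonal p.1 (by omega)]
  · rw [hgram]
    exact posDef_one_sub_half_smul_diagonal _
  · rw [hprod p L hL.ge, if_pos rfl, hL, inv_sqrt_two_pow]
  · rw [← conjTranspose_eq_zero, hprod p M hkM, if_neg hML, smul_zero]
end

section
/- For an infinite-dimensional Hilbert space E, the set {E(W)* e : W ∈ B_N(E), e ∈ E} is total in ⊕_{σ ∈ F_N^+} E; equivalently, if a vector x = (x_σ)_σ satisfies Σ_σ W_σ x_σ = 0 (i.e. E(W)x = 0) for all W ∈ B_N(E), then x = 0. -/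
noncomputable section
abbrev FM (N : ℕ) := FreeMonoid (Fin N)
namespace NCSzego
variable {N : ℕ} {E : Type*} [NormedAddCommGroup E] [InnerProductSpace ℂ E] [CompleteSpace E]

/-- The word product `Z_σ = Z_{i_1} ⋯ Z_{i_k}` for `σ = i_1 ⋯ i_k`. -/
def opWord (Z : Fin N → E →L[ℂ] E) (σ : FM N) : E →L[ℂ] E :=
  ((FreeMonoid.toList σ).map Z).prod

/-- Membership in the open operator `N`-ball: `(Z | Z) = Σ_k Z_k Z_k* < I`. -/
def InBall (Z : Fin N → E →L[ℂ] E) : Prop :=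
  ∃ r : ℝ, r < 1 ∧ ∀ x : E, ∑ k : Fin N, ‖ContinuousLinearMap.adjoint (Z k) x‖ ^ 2 ≤ r * ‖x‖ ^ 2

/-- Evaluation of a noncommutative polynomial `P = Σ_σ c_σ X_σ` at an operator tuple. -/
def evalOp (Z : Fin N → E →L[ℂ] E) (P : FM N →₀ ℂ) : E →L[ℂ] E :=
  P.sum fun σ c => c • opWord Z σ
end NCSzego

/-!
Argue by induction on the length `m` of a word `μ`, assuming `x σ = 0` for all shorter `σ`.
Since `E` is infinite-dimensional there are orthonormal `f₀, …, f_{m-1}` orthogonal to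
`f_m := x μ`. Let `W_k` send `f_{j+1}` to `f_j` at each position `j` where `μ` has the letter `k`,
scaled by some `c ≠ 0` into the ball. Then `⟪f₀, W_σ y⟫` vanishes unless `σ` is a prefix of `μ`,
where it equals `c ^ |σ| * ⟪f_{|σ|}, y⟫`. Pairing `Σ_σ W_σ (x σ) = 0` with `f₀` therefore leaves
only `c ^ m * ‖x μ‖² = 0`.
-/

open scoped InnerProductSpace

theorem List.cons_prefix_drop_iff {α : Type*} {L l : List α} {a : α} {p : ℕ} :
    a :: l <+: L.drop p ↔ L[p]? = some a ∧ l <+: L.drop (p + 1) := by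
  rcases lt_or_ge p L.length with hp | hp
  · rw [List.drop_eq_getElem_cons hp, List.cons_prefix_cons, List.getElem?_eq_getElem hp,
      Option.some_inj, eq_comm]
  · simp [List.drop_eq_nil_of_le hp, List.getElem?_eq_none hp]

lemma exists_orthonormal_orthogonal {𝕜 F : Type*} [RCLike 𝕜] [NormedAddCommGroup F]
    [InnerProductSpace 𝕜 F] (h : ¬ FiniteDimensional 𝕜 F) (v : F) (n : ℕ) :
    ∃ g : Fin n → F, Orthonormal 𝕜 g ∧ ∀ i, ⟪v, g i⟫_𝕜 = 0 := by
  set K := (𝕜 ∙ v)ᗮ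
  have hK : ¬ Module.Finite 𝕜 K := by
    intro hK
    have := Submodule.finiteDimensional_sup (𝕜 ∙ v) K
    rw [Submodule.sup_orthogonal_of_hasOrthogonalProjection] at this
    exact h (Module.Finite.equiv Submodule.topEquiv)
  have hn : (n : Cardinal) ≤ Module.rank 𝕜 K :=
    ((Cardinal.natCast_lt_aleph0 (n := n)).trans_le
      (not_lt.1 (mt Module.rank_lt_aleph0_iff.1 hK))).le
  obtain ⟨b, hb⟩ := exists_linearIndependent_of_le_rank hn
  exact ⟨K.subtypeₗᵢ ∘ InnerProductSpace.gramSchmidtNormed 𝕜 b,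
    (InnerProductSpace.gramSchmidtNormed_orthonormal hb).comp_linearIsometry _,
    fun i => Submodule.mem_orthogonal_singleton_iff_inner_right.1
      (InnerProductSpace.gramSchmidtNormed 𝕜 b i).2⟩

namespace NCSzego

variable {N : ℕ} {E : Type*} [NormedAddCommGroup E] [InnerProductSpace ℂ E]

lemma opWord_smul (W : Fin N → E →L[ℂ] E) (c : ℂ) (σ : FM N) :
    opWord (fun k => c • W k) σ = c ^ σ.length • opWord W σ := by
  rw [opWord, opWord, FreeMonoid.length]
  induction σ.toList with
  | nil => simp
  | cons k l ih => simp [ih, pow_succ, mul_smul]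

def wordShift (L : List (Fin N)) (f : ℕ → E) (k : Fin N) : E →L[ℂ] E :=
  ∑ j ∈ Finset.range L.length with L[j]? = some k, (innerSL ℂ (f (j + 1))).smulRight (f j)

section wordShift
variable {L : List (Fin N)} {f : ℕ → E}
  (hf : ∀ i ≤ L.length, ∀ j < L.length, ⟪f i, f j⟫_ℂ = if i = j then 1 else 0)
include hf

lemma inner_wordShift_apply {p : ℕ} (hp : p ≤ L.length) (k : Fin N) (u : E) :
    ⟪f p, wordShift L f k u⟫_ℂ = if L[p]? = some k then ⟪f (p + 1), u⟫_ℂ else 0 := by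
  simp only [wordShift, sum_apply, inner_sum,
    ContinuousLinearMap.smulRight_apply, innerSL_apply_apply, inner_smul_right]
  rw [Finset.sum_congr rfl fun j hj => by
    rw [hf p hp j (Finset.mem_range.1 (Finset.mem_filter.1 hj).1), mul_ite, mul_one, mul_zero]]
  refine (Finset.sum_ite_eq _ _ _).trans (if_congr ?_ rfl rfl)
  rw [Finset.mem_filter, Finset.mem_range, and_iff_right_iff_imp]
  exact fun hpk => (List.getElem?_eq_some_iff.1 hpk).1

lemma inner_prod_map_wordShift_apply (l : List (Fin N)) {p : ℕ} (hp : p ≤ L.length) (u : E) :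
    ⟪f p, (l.map (wordShift L f)).prod u⟫_ℂ =
      if l <+: L.drop p then ⟪f (p + l.length), u⟫_ℂ else 0 := by
  induction l generalizing p with
  | nil => simp
  | cons k l ih =>
    rw [List.map_cons, List.prod_cons, mul_apply_eq_comp, inner_wordShift_apply hf hp]
    simp only [List.cons_prefix_drop_iff]
    by_cases hpk : L[p]? = some k
    · have hp' : p + 1 ≤ L.length := (List.getElem?_eq_some_iff.1 hpk).1
      simp only [hpk, ih hp', true_and, if_true, List.length_cons, add_assoc, add_comm 1]
    · simp only [hpk, false_and, if_false]
end wordShift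

variable [CompleteSpace E]

lemma inBall_of_sum_norm_sq_lt_one {W : Fin N → E →L[ℂ] E} (hW : ∑ k, ‖W k‖ ^ 2 < 1) :
    InBall W := by
  refine ⟨_, hW, fun y => ?_⟩
  rw [Finset.sum_mul]
  gcongr with k
  calc ‖ContinuousLinearMap.adjoint (W k) y‖ ^ 2
      ≤ (‖ContinuousLinearMap.adjoint (W k)‖ * ‖y‖) ^ 2 := by
        gcongr; exact ContinuousLinearMap.le_opNorm _ _
    _ = ‖W k‖ ^ 2 * ‖y‖ ^ 2 := by rw [LinearIsometryEquiv.norm_map, mul_pow]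

lemma exists_inBall_smul (W : Fin N → E →L[ℂ] E) :
    ∃ c : ℂ, c ≠ 0 ∧ InBall fun k => c • W k := by
  set B := ∑ k, ‖W k‖ ^ 2
  have hB : 0 ≤ B := by positivity
  refine ⟨((B + 1)⁻¹ : ℝ), by norm_cast; positivity, inBall_of_sum_norm_sq_lt_one ?_⟩
  simp only [norm_smul, mul_pow, ← Finset.mul_sum, Complex.norm_real, Real.norm_eq_abs,
    sq_abs, inv_pow]
  rw [inv_mul_lt_one₀ (by positivity)]
  nlinarith

lemma apply_eq_zero_of_forall_length_lt (h : ¬ FiniteDimensional ℂ E)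
    (x : lp (fun _ : FM N => E) 2)
    (hx : ∀ W : Fin N → E →L[ℂ] E, InBall W →
      HasSum (fun σ : FM N => opWord W σ (x σ)) 0)
    (μ : FM N) (hshort : ∀ σ : FM N, σ.length < μ.length → x σ = 0) : x μ = 0 := by
  classical
  set L := μ.toList
  obtain ⟨g, hg, hgx⟩ := exists_orthonormal_orthogonal h (x μ) L.length
  set f : ℕ → E := fun n => if hn : n < L.length then g ⟨n, hn⟩ else x μ
  have hf : ∀ i ≤ L.length, ∀ j < L.length, ⟪f i, f j⟫_ℂ = if i = j then 1 else 0 := by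
    intro i hi j hj
    simp only [f, dif_pos hj]
    rcases hi.lt_or_eq with hi | rfl
    · simp [dif_pos hi, orthonormal_iff_ite.1 hg, Fin.ext_iff]
    · rw [dif_neg (lt_irrefl _), hgx, if_neg hj.ne']
  obtain ⟨c, hc, hball⟩ := exists_inBall_smul (wordShift L f)
  -- shorter prefixes of `μ` are killed by `hshort`, all other words by the shift structure
  have hterm : ∀ σ : FM N, ⟪f 0, opWord (fun k => c • wordShift L f k) σ (x σ)⟫_ℂ =
      if σ = μ then c ^ L.length * ⟪x μ, x μ⟫_ℂ else 0 := by
    intro σ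
    rw [opWord_smul, smul_apply, inner_smul_right, opWord,
      inner_prod_map_wordShift_apply hf _ (Nat.zero_le _), List.drop_zero, zero_add]
    split_ifs with hpre hσ hσ
    · simp [hσ, f, FreeMonoid.length, L]
    · have hlt : σ.length < μ.length := lt_of_le_of_ne hpre.length_le fun hlen =>
        hσ (FreeMonoid.toList.injective (hpre.eq_of_length hlen))
      rw [hshort σ hlt, inner_zero_right, mul_zero]
    · exact absurd (hσ ▸ List.prefix_refl L) hpre
    · exact mul_zero _
  have hsum := (innerSL ℂ (f 0)).hasSum (hx _ hball)
  simp only [innerSL_apply_apply, hterm, map_zero] at hsum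
  have hzero := (hasSum_ite_eq μ _).unique hsum
  exact inner_self_eq_zero.1 ((mul_eq_zero.1 hzero).resolve_left (pow_ne_zero _ hc))

/-- For an infinite-dimensional Hilbert space `E`, the set
`{E(W)* e : W ∈ B_N(E), e ∈ E}` is total in `⊕_{σ ∈ F_N^+} E`; equivalently,
if a square-summable vector `x = (x_σ)_σ` satisfies `E(W) x = Σ_σ W_σ x_σ = 0`
for all `W` in the open operator `N`-ball, then `x = 0`. -/
theorem eval_row_injective (h : ¬ FiniteDimensional ℂ E)
    (x : lp (fun _ : FM N => E) 2)
    (hx : ∀ W : Fin N → E →L[ℂ] E, InBall W →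
      HasSum (fun σ : FM N => opWord W σ (x σ)) 0) :
    x = 0 :=
  lp.ext <| funext fun μ => (measure FreeMonoid.length).wf.induction μ fun μ hshort =>
    apply_eq_zero_of_forall_length_lt h x hx μ hshort

end NCSzego
end
end
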